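/- arXiv:2411.17597 — 10 statements merged into one kernel-verified Lean document; each statement's English description precedes it below -/
import Mathlib

section
/- For a decision-maker in case 2 (p_α ≥ 1/2, p_{αα} ≥ 1/2, p_{αβ} ≤ 1/2), the expected gain from observing the second signal minus the expected payoff from acting on the first signal alone equals ΔU · P(β₂|α₁) · (1 - 2p_{αβ}), which is nonnegative. -/
/-- Case 2: (expected payoff from observing the second signal) minus
(expected payoff from acting on the first signal alone) equals
ΔU · P(β₂|α₁) · (1 - 2 p_{αβ}), which is nonnegative. -/
theorem case2_value_of_information (θ₁ θ₂ p Uh Ul : ℝ)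
    (h1 : 1/2 < θ₁) (h1' : θ₁ < 1) (h2 : 1/2 < θ₂) (h2' : θ₂ < 1)
    (hU : Ul < Uh)
    (hpl : 1 - θ₁ ≤ p) (hpr : p ≤ θ₂ * (1 - θ₁) / (θ₁ + θ₂ - 2 * θ₁ * θ₂)) :
    (((θ₁ * p / (θ₁ * p + (1 - θ₁) * (1 - p))) * θ₂ +
        (1 - θ₁ * p / (θ₁ * p + (1 - θ₁) * (1 - p))) * (1 - θ₂)) *
        ((θ₁ * θ₂ * p / (θ₁ * θ₂ * p + (1 - θ₁) * (1 - θ₂) * (1 - p))) * Uh +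
          (1 - θ₁ * θ₂ * p / (θ₁ * θ₂ * p + (1 - θ₁) * (1 - θ₂) * (1 - p))) * Ul) +
      ((θ₁ * p / (θ₁ * p + (1 - θ₁) * (1 - p))) * (1 - θ₂) +
        (1 - θ₁ * p / (θ₁ * p + (1 - θ₁) * (1 - p))) * θ₂) *
        ((1 - θ₁ * (1 - θ₂) * p / (θ₁ * (1 - θ₂) * p + (1 - θ₁) * θ₂ * (1 - p))) * Uh +
          (θ₁ * (1 - θ₂) * p / (θ₁ * (1 - θ₂) * p + (1 - θ₁) * θ₂ * (1 - p))) * Ul)) -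
      ((θ₁ * p / (θ₁ * p + (1 - θ₁) * (1 - p))) * Uh +
        (1 - θ₁ * p / (θ₁ * p + (1 - θ₁) * (1 - p))) * Ul) =
      (Uh - Ul) *
        ((θ₁ * p / (θ₁ * p + (1 - θ₁) * (1 - p))) * (1 - θ₂) +
          (1 - θ₁ * p / (θ₁ * p + (1 - θ₁) * (1 - p))) * θ₂) *
        (1 - 2 * (θ₁ * (1 - θ₂) * p / (θ₁ * (1 - θ₂) * p + (1 - θ₁) * θ₂ * (1 - p)))) ∧
    0 ≤ (Uh - Ul) *
        ((θ₁ * p / (θ₁ * p + (1 - θ₁) * (1 - p))) * (1 - θ₂) +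
          (1 - θ₁ * p / (θ₁ * p + (1 - θ₁) * (1 - p))) * θ₂) *
        (1 - 2 * (θ₁ * (1 - θ₂) * p / (θ₁ * (1 - θ₂) * p + (1 - θ₁) * θ₂ * (1 - p)))) := by
  have hp0 : 0 < p := lt_of_lt_of_le (by linarith) hpl
  have hsum : 0 < θ₁ + θ₂ - 2 * θ₁ * θ₂ := by nlinarith
  have hp1 : p < 1 := by
    have : θ₂ * (1 - θ₁) / (θ₁ + θ₂ - 2 * θ₁ * θ₂) < 1 := by
      rw [div_lt_one hsum]; nlinarith
    linarith [hpr.trans_lt this]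
  -- key inequality from hpr
  have hkey : θ₁ * (1 - θ₂) * p ≤ (1 - θ₁) * θ₂ * (1 - p) := by
    have h := (le_div_iff₀ hsum).mpr (le_refl (p * (θ₁ + θ₂ - 2 * θ₁ * θ₂)))
    nlinarith [(le_div_iff₀ hsum).mp (le_refl (θ₂ * (1 - θ₁) / (θ₁ + θ₂ - 2 * θ₁ * θ₂))), mul_le_mul_of_nonneg_right hpr hsum.le, div_mul_cancel₀ (θ₂ * (1 - θ₁)) (ne_of_gt hsum)]
  have hD1 : 0 < θ₁ * p + (1 - θ₁) * (1 - p) := by nlinarith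
  have hD2 : 0 < θ₁ * θ₂ * p + (1 - θ₁) * (1 - θ₂) * (1 - p) := by nlinarith
  have hD3 : 0 < θ₁ * (1 - θ₂) * p + (1 - θ₁) * θ₂ * (1 - p) := by nlinarith
  constructor
  · have e2 : θ₁ * p * θ₂ + (1 - θ₁) * (1 - p) * (1 - θ₂) ≠ 0 := by nlinarith
    have e3 : θ₁ * p * (1 - θ₂) + (1 - θ₁) * (1 - p) * θ₂ ≠ 0 := by nlinarith
    field_simp
    ring
  · have h3 : 0 ≤ 1 - 2 * (θ₁ * (1 - θ₂) * p / (θ₁ * (1 - θ₂) * p + (1 - θ₁) * θ₂ * (1 - p))) := by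
      have hle : θ₁ * (1 - θ₂) * p / (θ₁ * (1 - θ₂) * p + (1 - θ₁) * θ₂ * (1 - p)) ≤ 1/2 := by
        rw [div_le_iff₀ hD3]; nlinarith
      linarith
    have h2 : 0 ≤ (θ₁ * p / (θ₁ * p + (1 - θ₁) * (1 - p))) * (1 - θ₂) +
        (1 - θ₁ * p / (θ₁ * p + (1 - θ₁) * (1 - p))) * θ₂ := by
      have hx : 0 ≤ θ₁ * p / (θ₁ * p + (1 - θ₁) * (1 - p)) := by positivity
      have hx1 : θ₁ * p / (θ₁ * p + (1 - θ₁) * (1 - p)) ≤ 1 := by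
        rw [div_le_one hD1]; nlinarith
      nlinarith
    have := mul_nonneg (mul_nonneg (by linarith : (0:ℝ) ≤ Uh - Ul) h2) h3
    linarith [this]
end

section
/- The willingness-to-pay function in case 3, c³_α(p) = ΔU·[θ₁θ₂p - (1-θ₁)(1-θ₂)(1-p)] / [θ₁p + (1-θ₁)(1-p)], is strictly increasing and strictly concave in p on the interval [1 - θ₁θ₂/(1-θ₁-θ₂+2θ₁θ₂), 1-θ₁]. -/
/-- The case-3 willingness-to-pay function is strictly increasing and strictly
concave on [1 - θ₁θ₂/(1-θ₁-θ₂+2θ₁θ₂), 1-θ₁]. -/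
theorem case3_cost_increasing_concave (θ₁ θ₂ ΔU : ℝ)
    (h1 : 1/2 < θ₁) (h1' : θ₁ < 1) (h2 : 1/2 < θ₂) (h2' : θ₂ < 1) (hU : 0 < ΔU) :
    StrictMonoOn
      (fun p : ℝ => ΔU * ((θ₁ * θ₂ * p - (1 - θ₁) * (1 - θ₂) * (1 - p)) /
        (θ₁ * p + (1 - θ₁) * (1 - p))))
      (Set.Icc (1 - θ₁ * θ₂ / (1 - θ₁ - θ₂ + 2 * θ₁ * θ₂)) (1 - θ₁)) ∧
    StrictConcaveOn ℝ
      (Set.Icc (1 - θ₁ * θ₂ / (1 - θ₁ - θ₂ + 2 * θ₁ * θ₂)) (1 - θ₁))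
      (fun p : ℝ => ΔU * ((θ₁ * θ₂ * p - (1 - θ₁) * (1 - θ₂) * (1 - p)) /
        (θ₁ * p + (1 - θ₁) * (1 - p)))) := by
  set f : ℝ → ℝ := fun p : ℝ => ΔU * ((θ₁ * θ₂ * p - (1 - θ₁) * (1 - θ₂) * (1 - p)) /
        (θ₁ * p + (1 - θ₁) * (1 - p))) with hf
  set a : ℝ := 1 - θ₁ * θ₂ / (1 - θ₁ - θ₂ + 2 * θ₁ * θ₂) with haa
  have hdd : 0 < 1 - θ₁ - θ₂ + 2 * θ₁ * θ₂ := by nlinarith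
  have ha0 : 0 < a := by
    rw [haa, sub_pos, div_lt_one hdd]; nlinarith
  have hD : ∀ p : ℝ, 0 < p → 0 < θ₁ * p + (1 - θ₁) * (1 - p) := by
    intro p hp; nlinarith
  -- derivative
  have hderiv : ∀ p : ℝ, 0 < p → HasDerivAt f
      (ΔU * (θ₁ * (1 - θ₁)) / (θ₁ * p + (1 - θ₁) * (1 - p)) ^ 2) p := by
    intro p hp
    have hN : HasDerivAt (fun p : ℝ => θ₁ * θ₂ * p - (1 - θ₁) * (1 - θ₂) * (1 - p))
        (θ₁ * θ₂ - (1 - θ₁) * (1 - θ₂) * (-1)) p := by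
      have h1 : HasDerivAt (fun p : ℝ => θ₁ * θ₂ * p) (θ₁ * θ₂) p := by
        simpa using (hasDerivAt_id p).const_mul (θ₁ * θ₂)
      have h2 : HasDerivAt (fun p : ℝ => (1 - θ₁) * (1 - θ₂) * (1 - p))
          ((1 - θ₁) * (1 - θ₂) * (-1)) p := by
        have : HasDerivAt (fun p : ℝ => 1 - p) (-1) p := by
          simpa using (hasDerivAt_id p).const_sub (1:ℝ)
        simpa using this.const_mul ((1 - θ₁) * (1 - θ₂))
      exact h1.sub h2
    have hDd : HasDerivAt (fun p : ℝ => θ₁ * p + (1 - θ₁) * (1 - p))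
        (θ₁ + (1 - θ₁) * (-1)) p := by
      have h1 : HasDerivAt (fun p : ℝ => θ₁ * p) θ₁ p := by
        simpa using (hasDerivAt_id p).const_mul θ₁
      have h2 : HasDerivAt (fun p : ℝ => (1 - θ₁) * (1 - p)) ((1 - θ₁) * (-1)) p := by
        have : HasDerivAt (fun p : ℝ => 1 - p) (-1) p := by
          simpa using (hasDerivAt_id p).const_sub (1:ℝ)
        simpa using this.const_mul (1 - θ₁)
      exact h1.add h2
    have hQ := (hN.div hDd (ne_of_gt (hD p hp))).const_mul ΔU
    refine HasDerivAt.congr_deriv hQ ?_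
    symm
    rw [mul_div_assoc]
    congr 1
    congr 1
    ring
  have hderiv' : ∀ p : ℝ, 0 < p →
      deriv f p = ΔU * (θ₁ * (1 - θ₁)) / (θ₁ * p + (1 - θ₁) * (1 - p)) ^ 2 := fun p hp =>
    (hderiv p hp).deriv
  have hcont : ContinuousOn f (Set.Icc a (1 - θ₁)) := by
    intro p hp
    have hp0 : 0 < p := lt_of_lt_of_le ha0 hp.1
    exact ((hderiv p hp0).continuousAt).continuousWithinAt
  have hint : interior (Set.Icc a (1 - θ₁)) = Set.Ioo a (1 - θ₁) := interior_Icc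
  constructor
  · apply strictMonoOn_of_deriv_pos (convex_Icc _ _) hcont
    intro p hp
    rw [hint] at hp
    have hp0 : 0 < p := lt_trans ha0 hp.1
    rw [hderiv' p hp0]
    have hDp := hD p hp0
    exact div_pos (mul_pos hU (by nlinarith)) (pow_pos hDp 2)
  · apply StrictAntiOn.strictConcaveOn_of_deriv (convex_Icc _ _) hcont
    intro x hx y hy hxy
    rw [hint] at hx hy
    have hx0 : 0 < x := lt_trans ha0 hx.1
    have hy0 : 0 < y := lt_trans ha0 hy.1
    rw [hderiv' x hx0, hderiv' y hy0]
    have hDx := hD x hx0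
    have hDy := hD y hy0
    have hlt : θ₁ * x + (1 - θ₁) * (1 - x) < θ₁ * y + (1 - θ₁) * (1 - y) := by nlinarith
    exact div_lt_div_of_pos_left (mul_pos hU (by nlinarith)) (pow_pos hDx 2)
      (pow_lt_pow_left₀ hlt hDx.le (by norm_num))
end

section
/- The cost function c_α attains its global maximum over [0,1] at p = 1-θ₁, with maximum value ΔU·(θ₂ - 1/2); similarly c_β attains its global maximum at p = θ₁ with the same value ΔU·(θ₂ - 1/2). -/
/-- Piecewise willingness-to-pay function after observing σ₁ = α. -/
noncomputable def costAlpha (ΔU θ₁ θ₂ p : ℝ) : ℝ :=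
  if p ≤ 1 - θ₁ * θ₂ / (1 - θ₁ - θ₂ + 2 * θ₁ * θ₂) then 0
  else if p ≤ 1 - θ₁ then
    ΔU * ((θ₁ * θ₂ * p - (1 - θ₁) * (1 - θ₂) * (1 - p)) /
      (θ₁ * p + (1 - θ₁) * (1 - p)))
  else if p ≤ θ₂ * (1 - θ₁) / (θ₁ + θ₂ - 2 * θ₁ * θ₂) then
    ΔU * ((θ₂ * (1 - p) - θ₁ * p - θ₁ * θ₂ * (1 - 2 * p)) /
      (θ₁ * p + (1 - θ₁) * (1 - p)))
  else 0

/-- Piecewise willingness-to-pay function after observing σ₁ = β. -/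
noncomputable def costBeta (ΔU θ₁ θ₂ p : ℝ) : ℝ :=
  if p ≤ θ₁ * (1 - θ₂) / (θ₁ + θ₂ - 2 * θ₁ * θ₂) then 0
  else if p ≤ θ₁ then
    ΔU * (((1 - θ₁) * θ₂ * p - θ₁ * (1 - θ₂) * (1 - p)) /
      ((1 - θ₁) * p + θ₁ * (1 - p)))
  else if p ≤ θ₁ * θ₂ / (1 - θ₁ - θ₂ + 2 * θ₁ * θ₂) then
    ΔU * ((θ₁ * θ₂ * (1 - p) - (1 - θ₁) * (1 - θ₂) * p) /
      ((1 - θ₁) * p + θ₁ * (1 - p)))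
  else 0

/-- c_α attains its global maximum on [0,1] at p = 1-θ₁ with value ΔU(θ₂-1/2);
c_β attains its global maximum at p = θ₁ with the same value. -/
theorem cost_global_max (θ₁ θ₂ ΔU : ℝ)
    (h1 : 1/2 < θ₁) (h1' : θ₁ < 1) (h2 : 1/2 < θ₂) (h2' : θ₂ < 1) (hU : 0 < ΔU) :
    (∀ p ∈ Set.Icc (0:ℝ) 1, costAlpha ΔU θ₁ θ₂ p ≤ costAlpha ΔU θ₁ θ₂ (1 - θ₁)) ∧
    costAlpha ΔU θ₁ θ₂ (1 - θ₁) = ΔU * (θ₂ - 1/2) ∧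
    (∀ p ∈ Set.Icc (0:ℝ) 1, costBeta ΔU θ₁ θ₂ p ≤ costBeta ΔU θ₁ θ₂ θ₁) ∧
    costBeta ΔU θ₁ θ₂ θ₁ = ΔU * (θ₂ - 1/2) := by
  have hs : (0:ℝ) < 1 - θ₁ - θ₂ + 2 * θ₁ * θ₂ := by nlinarith
  have hs' : (0:ℝ) < θ₁ + θ₂ - 2 * θ₁ * θ₂ := by nlinarith
  have hvalA : costAlpha ΔU θ₁ θ₂ (1 - θ₁) = ΔU * (θ₂ - 1/2) := by
    unfold costAlpha
    rw [if_neg, if_pos le_rfl]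
    · have hden : θ₁ * (1 - θ₁) + (1 - θ₁) * (1 - (1 - θ₁)) ≠ 0 := by nlinarith
      have key : (θ₁ * θ₂ * (1 - θ₁) - (1 - θ₁) * (1 - θ₂) * (1 - (1 - θ₁))) /
          (θ₁ * (1 - θ₁) + (1 - θ₁) * (1 - (1 - θ₁))) = θ₂ - 1/2 := by
        rw [div_eq_iff hden]; ring
      rw [key]
    · rw [not_le, sub_lt_sub_iff_left, lt_div_iff₀ hs]
      nlinarith [mul_pos (mul_pos (show (0:ℝ) < θ₁ by linarith)
        (show (0:ℝ) < 2*θ₂-1 by linarith)) (show (0:ℝ) < 1-θ₁ by linarith)]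
  have hvalB : costBeta ΔU θ₁ θ₂ θ₁ = ΔU * (θ₂ - 1/2) := by
    unfold costBeta
    rw [if_neg, if_pos le_rfl]
    · have hden : (1 - θ₁) * θ₁ + θ₁ * (1 - θ₁) ≠ 0 := by nlinarith
      have key : ((1 - θ₁) * θ₂ * θ₁ - θ₁ * (1 - θ₂) * (1 - θ₁)) /
          ((1 - θ₁) * θ₁ + θ₁ * (1 - θ₁)) = θ₂ - 1/2 := by
        rw [div_eq_iff hden]; ring
      rw [key]
    · rw [not_le, div_lt_iff₀ hs']
      nlinarith [mul_pos (mul_pos (show (0:ℝ) < θ₁ by linarith)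
        (show (0:ℝ) < 2*θ₂-1 by linarith)) (show (0:ℝ) < 1-θ₁ by linarith)]
  refine ⟨?_, hvalA, ?_, hvalB⟩
  · intro p hp
    obtain ⟨hp0, hp1⟩ := hp
    rw [hvalA]
    have hD : (0:ℝ) < θ₁ * p + (1 - θ₁) * (1 - p) := by nlinarith
    unfold costAlpha
    split_ifs with ha hb hc
    · nlinarith
    · refine mul_le_mul_of_nonneg_left ?_ hU.le
      rw [div_le_iff₀ hD]
      nlinarith
    · refine mul_le_mul_of_nonneg_left ?_ hU.le
      rw [div_le_iff₀ hD]
      rw [not_le] at hb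
      nlinarith
    · nlinarith
  · intro p hp
    obtain ⟨hp0, hp1⟩ := hp
    rw [hvalB]
    have hD : (0:ℝ) < (1 - θ₁) * p + θ₁ * (1 - p) := by nlinarith
    unfold costBeta
    split_ifs with ha hb hc
    · nlinarith
    · refine mul_le_mul_of_nonneg_left ?_ hU.le
      rw [div_le_iff₀ hD]
      nlinarith
    · refine mul_le_mul_of_nonneg_left ?_ hU.le
      rw [div_le_iff₀ hD]
      rw [not_le] at hb
      nlinarith
    · nlinarith
end

section
/- The cost functions satisfy the symmetry relation c_α(p) = c_β(1-p) for all p ∈ [0,1]. -/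
set_option maxHeartbeats 1600000 in
/-- Symmetry of the cost functions: c_α(p) = c_β(1-p) on [0,1]. -/
theorem cost_symmetry (θ₁ θ₂ ΔU : ℝ)
    (h1 : 1/2 < θ₁) (h1' : θ₁ < 1) (h2 : 1/2 < θ₂) (h2' : θ₂ < 1) (hU : 0 < ΔU) :
    ∀ p ∈ Set.Icc (0:ℝ) 1, costAlpha ΔU θ₁ θ₂ p = costBeta ΔU θ₁ θ₂ (1 - p) := by
  rintro p ⟨hp0, hp1⟩
  have hD : (0:ℝ) < 1 - θ₁ - θ₂ + 2 * θ₁ * θ₂ := by nlinarith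
  have hE : (0:ℝ) < θ₁ + θ₂ - 2 * θ₁ * θ₂ := by nlinarith
  have hden : (0:ℝ) < θ₁ * p + (1 - θ₁) * (1 - p) := by nlinarith
  have hden' : (0:ℝ) < (1 - θ₁) * (1 - p) + θ₁ * (1 - (1 - p)) := by nlinarith
  unfold costAlpha costBeta
  have hA1 : p ≤ 1 - θ₁ * θ₂ / (1 - θ₁ - θ₂ + 2 * θ₁ * θ₂) ↔
      θ₁ * θ₂ ≤ (1 - p) * (1 - θ₁ - θ₂ + 2 * θ₁ * θ₂) := by
    rw [le_sub_comm, div_le_iff₀ hD]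
  have hA3 : p ≤ θ₂ * (1 - θ₁) / (θ₁ + θ₂ - 2 * θ₁ * θ₂) ↔
      p * (θ₁ + θ₂ - 2 * θ₁ * θ₂) ≤ θ₂ * (1 - θ₁) := le_div_iff₀ hE
  have hB1 : 1 - p ≤ θ₁ * (1 - θ₂) / (θ₁ + θ₂ - 2 * θ₁ * θ₂) ↔
      (1 - p) * (θ₁ + θ₂ - 2 * θ₁ * θ₂) ≤ θ₁ * (1 - θ₂) := le_div_iff₀ hE
  have hB3 : 1 - p ≤ θ₁ * θ₂ / (1 - θ₁ - θ₂ + 2 * θ₁ * θ₂) ↔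
      (1 - p) * (1 - θ₁ - θ₂ + 2 * θ₁ * θ₂) ≤ θ₁ * θ₂ := le_div_iff₀ hD
  simp only [hA1, hA3, hB1, hB3]
  split_ifs <;>
    first
      | rfl
      | (rw [mul_comm ΔU, mul_comm ΔU, div_mul_eq_mul_div, div_mul_eq_mul_div,
            div_eq_div_iff hden.ne' hden'.ne']; ring1)
      | (symm; rw [mul_eq_zero]; right; rw [div_eq_zero_iff]; left; nlinarith)
      | (rw [mul_eq_zero]; right; rw [div_eq_zero_iff]; left; nlinarith)
      | (have hpe : p = 1 - θ₁ := by linarith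
         rw [hpe, mul_comm ΔU, mul_comm ΔU, div_mul_eq_mul_div, div_mul_eq_mul_div,
           div_eq_div_iff (ne_of_gt (by nlinarith)) (ne_of_gt (by nlinarith))]; ring1)
      | (exfalso; nlinarith)
end

section
/- For any processing cost c with 0 < c < ΔU(θ₂-1/2), inverting the cost function c_α yields the boundaries q̲_α(c) = (1-θ₁)[ΔU(θ₂-1)-c]/[ΔU(θ₁+θ₂-2θ₁θ₂-1)+(2θ₁-1)c] and q̄_α(c) = (1-θ₁)(ΔUθ₂-c)/[ΔU(θ₁+θ₂-2θ₁θ₂)+(2θ₁-1)c], and the set {p ∈ [0,1] : c_α(p) > c} equals the open interval (q̲_α(c), q̄_α(c)). -/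
set_option maxHeartbeats 1000000 in
/-- Inverting c_α: for 0 < c < ΔU(θ₂-1/2), the set of priors with
willingness-to-pay exceeding c is the open interval (q̲_α(c), q̄_α(c)). -/
theorem costAlpha_superlevel_set (θ₁ θ₂ ΔU c : ℝ)
    (h1 : 1/2 < θ₁) (h1' : θ₁ < 1) (h2 : 1/2 < θ₂) (h2' : θ₂ < 1) (hU : 0 < ΔU)
    (hc0 : 0 < c) (hc1 : c < ΔU * (θ₂ - 1/2)) :
    {p : ℝ | p ∈ Set.Icc (0:ℝ) 1 ∧ c < costAlpha ΔU θ₁ θ₂ p} =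
      Set.Ioo
        ((1 - θ₁) * (ΔU * (θ₂ - 1) - c) /
          (ΔU * (θ₁ + θ₂ - 2 * θ₁ * θ₂ - 1) + (2 * θ₁ - 1) * c))
        ((1 - θ₁) * (ΔU * θ₂ - c) /
          (ΔU * (θ₁ + θ₂ - 2 * θ₁ * θ₂) + (2 * θ₁ - 1) * c)) := by
  have hB : 0 < 2*θ₁ - 1 := by linarith
  have hA : 0 < 1 - θ₁ := by linarith
  have hd : 0 < 1 - θ₁ - θ₂ + 2*θ₁*θ₂ := by nlinarith
  have hs : 0 < θ₁ + θ₂ - 2*θ₁*θ₂ := by nlinarith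
  have hD1 : 0 < ΔU*(1 - θ₁ - θ₂ + 2*θ₁*θ₂) - (2*θ₁-1)*c := by nlinarith
  have hD2 : 0 < ΔU*(θ₁ + θ₂ - 2*θ₁*θ₂) + (2*θ₁-1)*c := by
    nlinarith [mul_pos hB hc0, mul_pos hU hs]
  have hN1 : 0 < (1-θ₁)*(ΔU*(1-θ₂)+c) :=
    mul_pos hA (by nlinarith [mul_pos hU (show (0:ℝ) < 1-θ₂ by linarith)])
  have hN2 : 0 < (1-θ₁)*(ΔU*θ₂-c) := mul_pos hA (by nlinarith)
  have hqL : (1 - θ₁) * (ΔU * (θ₂ - 1) - c) /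
      (ΔU * (θ₁ + θ₂ - 2 * θ₁ * θ₂ - 1) + (2 * θ₁ - 1) * c)
      = ((1-θ₁)*(ΔU*(1-θ₂)+c)) / (ΔU*(1 - θ₁ - θ₂ + 2*θ₁*θ₂) - (2*θ₁-1)*c) := by
    rw [div_eq_div_iff (by linarith : ΔU * (θ₁ + θ₂ - 2 * θ₁ * θ₂ - 1) + (2 * θ₁ - 1) * c ≠ 0)
      (ne_of_gt hD1)]
    ring
  rw [hqL]
  ext p
  simp only [Set.mem_setOf_eq, Set.mem_Icc, Set.mem_Ioo, costAlpha]
  constructor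
  · rintro ⟨⟨hp0, hp1⟩, hc⟩
    have hDp : 0 < θ₁ * p + (1 - θ₁) * (1 - p) := by nlinarith
    split_ifs at hc with ht0 ht1 ht2
    · linarith
    · rw [← mul_div_assoc, lt_div_iff₀ hDp] at hc
      have key : (1-θ₁)*(ΔU*(1-θ₂)+c) < p * (ΔU*(1 - θ₁ - θ₂ + 2*θ₁*θ₂) - (2*θ₁-1)*c) := by
        nlinarith
      constructor
      · rw [div_lt_iff₀ hD1]; linarith
      · rw [lt_div_iff₀ hD2]
        have h1R : (1-θ₁) * (ΔU*(θ₁ + θ₂ - 2*θ₁*θ₂) + (2*θ₁-1)*c) < (1-θ₁)*(ΔU*θ₂-c) := by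
          nlinarith
        nlinarith
    · rw [← mul_div_assoc, lt_div_iff₀ hDp] at hc
      have key : p * (ΔU*(θ₁ + θ₂ - 2*θ₁*θ₂) + (2*θ₁-1)*c) < (1-θ₁)*(ΔU*θ₂-c) := by
        nlinarith
      push_neg at ht1
      constructor
      · rw [div_lt_iff₀ hD1]
        have h1L : (1-θ₁)*(ΔU*(1-θ₂)+c) < (1-θ₁) * (ΔU*(1 - θ₁ - θ₂ + 2*θ₁*θ₂) - (2*θ₁-1)*c) := by
          nlinarith
        nlinarith
      · rw [lt_div_iff₀ hD2]; linarith
    · linarith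
  · rintro ⟨hl, hr⟩
    rw [div_lt_iff₀ hD1] at hl
    rw [lt_div_iff₀ hD2] at hr
    have hp0 : 0 < p := by nlinarith
    have hp1 : p < 1 := by nlinarith [mul_pos hU (mul_pos (by linarith : (0:ℝ) < θ₁) (by linarith : (0:ℝ) < 1-θ₂))]
    have hDp : 0 < θ₁ * p + (1 - θ₁) * (1 - p) := by nlinarith
    refine ⟨⟨le_of_lt hp0, le_of_lt hp1⟩, ?_⟩
    split_ifs with ht0 ht1 ht2
    · exfalso
      have h2' : θ₁*θ₂/(1 - θ₁ - θ₂ + 2*θ₁*θ₂) ≤ 1 - p := by linarith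
      rw [div_le_iff₀ hd] at h2'
      nlinarith [mul_lt_mul_of_pos_right hl hd, mul_pos (mul_pos hA hc0) (by linarith : (0:ℝ) < θ₁), mul_le_mul_of_nonneg_right (by nlinarith : p * (1 - θ₁ - θ₂ + 2*θ₁*θ₂) ≤ (1-θ₁)*(1-θ₂)) (le_of_lt hD1)]
    · rw [← mul_div_assoc, lt_div_iff₀ hDp]
      nlinarith
    · rw [← mul_div_assoc, lt_div_iff₀ hDp]
      nlinarith
    · exfalso
      push_neg at ht2
      rw [div_lt_iff₀ hs] at ht2
      nlinarith [mul_lt_mul_of_pos_right hr hs, mul_pos (mul_pos hA hc0) (by linarith : (0:ℝ) < θ₁), mul_lt_mul_of_pos_right ht2 hD2]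
end

section
/- On their shared domain, the case-3 cost function strictly dominates the case-6 cost function: c³_α(p) > c⁶_β(p) for all p in the interior of the intersection of their domains; similarly c²_α(p) < c⁷_β(p) on the interior of the shared domain of cases 2 and 7. Consequently the only prior at which c_α(p) = c_β(p) with both positive is p = 1/2. -/
/-- On shared domains c³_α > c⁶_β and c²_α < c⁷_β; hence the only prior with
c_α(p) = c_β(p) > 0 is p = 1/2. -/
theorem case_cost_dominance (θ₁ θ₂ ΔU : ℝ)
    (h1 : 1/2 < θ₁) (h1' : θ₁ < 1) (h2 : 1/2 < θ₂) (h2' : θ₂ < 1) (hU : 0 < ΔU) :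
    (∀ p : ℝ,
      max (1 - θ₁ * θ₂ / (1 - θ₁ - θ₂ + 2 * θ₁ * θ₂))
          (θ₁ * (1 - θ₂) / (θ₁ + θ₂ - 2 * θ₁ * θ₂)) < p →
      p < min (1 - θ₁) θ₁ →
      ΔU * (((1 - θ₁) * θ₂ * p - θ₁ * (1 - θ₂) * (1 - p)) /
          ((1 - θ₁) * p + θ₁ * (1 - p))) <
        ΔU * ((θ₁ * θ₂ * p - (1 - θ₁) * (1 - θ₂) * (1 - p)) /
          (θ₁ * p + (1 - θ₁) * (1 - p)))) ∧
    (∀ p : ℝ,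
      max (1 - θ₁) θ₁ < p →
      p < min (θ₂ * (1 - θ₁) / (θ₁ + θ₂ - 2 * θ₁ * θ₂))
          (θ₁ * θ₂ / (1 - θ₁ - θ₂ + 2 * θ₁ * θ₂)) →
      ΔU * ((θ₂ * (1 - p) - θ₁ * p - θ₁ * θ₂ * (1 - 2 * p)) /
          (θ₁ * p + (1 - θ₁) * (1 - p))) <
        ΔU * ((θ₁ * θ₂ * (1 - p) - (1 - θ₁) * (1 - θ₂) * p) /
          ((1 - θ₁) * p + θ₁ * (1 - p)))) ∧
    (∀ p ∈ Set.Icc (0:ℝ) 1,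
      costAlpha ΔU θ₁ θ₂ p = costBeta ΔU θ₁ θ₂ p →
      0 < costAlpha ΔU θ₁ θ₂ p → p = 1/2) := by
  have hD : 0 < 1 - θ₁ - θ₂ + 2 * θ₁ * θ₂ := by nlinarith
  have hE : 0 < θ₁ + θ₂ - 2 * θ₁ * θ₂ := by nlinarith
  have hDa : ∀ p : ℝ, 0 ≤ p → p ≤ 1 → 0 < θ₁ * p + (1 - θ₁) * (1 - p) := by
    intro p hp0 hp1; nlinarith
  have hDb : ∀ p : ℝ, 0 ≤ p → p ≤ 1 → 0 < (1 - θ₁) * p + θ₁ * (1 - p) := by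
    intro p hp0 hp1; nlinarith
  -- thresholds
  have hta1 : 0 < 1 - θ₁ * θ₂ / (1 - θ₁ - θ₂ + 2 * θ₁ * θ₂) := by
    rw [sub_pos, div_lt_one hD]; nlinarith
  have htb1 : 0 < θ₁ * (1 - θ₂) / (θ₁ + θ₂ - 2 * θ₁ * θ₂) :=
    div_pos (by nlinarith) hE
  have hta3 : θ₂ * (1 - θ₁) / (θ₁ + θ₂ - 2 * θ₁ * θ₂) < 1 := by
    rw [div_lt_one hE]; nlinarith
  have htb3 : θ₁ * θ₂ / (1 - θ₁ - θ₂ + 2 * θ₁ * θ₂) < 1 := by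
    rw [div_lt_one hD]; nlinarith
  refine ⟨?_, ?_, ?_⟩
  · intro p hlo hhi
    have hp1 : p < 1 - θ₁ := lt_of_lt_of_le hhi (min_le_left _ _)
    have hp0 : 0 < p :=
      lt_trans (lt_of_lt_of_le hta1 (le_max_left _ _)) hlo
    have h1p : p < 1 := by linarith
    have da := hDa p (le_of_lt hp0) (le_of_lt h1p)
    have db := hDb p (le_of_lt hp0) (le_of_lt h1p)
    rw [mul_lt_mul_iff_right₀ hU, div_lt_div_iff₀ db da]
    nlinarith [mul_pos hp0 (by linarith : (0:ℝ) < 1 - p)]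
  · intro p hlo hhi
    have hp0 : 0 < p := lt_trans (by linarith [le_max_right (1 - θ₁) θ₁]) hlo
    have h1p : p < 1 :=
      lt_trans (lt_of_lt_of_le hhi (min_le_left _ _)) hta3
    have da := hDa p (le_of_lt hp0) (le_of_lt h1p)
    have db := hDb p (le_of_lt hp0) (le_of_lt h1p)
    rw [mul_lt_mul_iff_right₀ hU, div_lt_div_iff₀ da db]
    nlinarith [mul_pos hp0 (by linarith : (0:ℝ) < 1 - p)]
  · rintro p ⟨hp0, hp1⟩ heq hpos
    simp only [costAlpha, costBeta] at heq hpos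
    split_ifs at heq hpos with ha1 ha2 ha3 hb1 hb2 hb3 hb1' hb2' hb3' hb1'' hb2'' hb3''
    all_goals try exact absurd hpos (lt_irrefl 0)
    all_goals try { rw [← heq] at hpos; exact absurd hpos (lt_irrefl 0) }
    all_goals try { exfalso; rw [heq] at hpos; exact lt_irrefl 0 hpos }
    -- remaining: (α2,β2), (α2,β3), (α3,β2), (α3,β3)
    · -- α2, β2
      exfalso
      push_neg at ha1
      have hq0 : 0 < p := lt_trans hta1 ha1
      have hq1 : p < 1 := by linarith
      have da := ne_of_gt (hDa p hq0.le hq1.le)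
      have db := ne_of_gt (hDb p hq0.le hq1.le)
      have key := mul_left_cancel₀ (ne_of_gt hU) heq
      rw [div_eq_div_iff (ne_of_gt (hDa p hq0.le hq1.le)) (ne_of_gt (hDb p hq0.le hq1.le))] at key
      have h0 : p * (1 - p) * (2 * θ₁ - 1) = 0 := by linear_combination key
      have hpp : 0 < p * (1 - p) * (2 * θ₁ - 1) :=
        mul_pos (mul_pos hq0 (by linarith)) (by linarith)
      linarith
    · -- α2, β3
      exfalso
      push_neg at hb1'
      linarith
    · -- α3, β2
      push_neg at hb2
      have hq0 : 0 < p := by linarith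
      have hq1 : p < 1 := lt_of_le_of_lt hb3' hta3
      have key := mul_left_cancel₀ (ne_of_gt hU) heq
      rw [div_eq_div_iff (ne_of_gt (hDa p hq0.le hq1.le)) (ne_of_gt (hDb p hq0.le hq1.le))] at key
      have h0 : θ₁ * (1 - θ₁) * (1 - 2 * p) = 0 := by linear_combination key
      have hne : θ₁ * (1 - θ₁) ≠ 0 := ne_of_gt (by nlinarith)
      have := (mul_eq_zero.mp h0).resolve_left hne
      linarith
    · -- α3, β3
      exfalso
      push_neg at hb2''
      have hq0 : 0 < p := by linarith
      have hq1 : p < 1 := lt_of_le_of_lt hb3' hta3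
      have key := mul_left_cancel₀ (ne_of_gt hU) heq
      rw [div_eq_div_iff (ne_of_gt (hDa p hq0.le hq1.le)) (ne_of_gt (hDb p hq0.le hq1.le))] at key
      have h0 : p * (1 - p) * (2 * θ₁ - 1) = 0 := by linear_combination -key
      have hpp : 0 < p * (1 - p) * (2 * θ₁ - 1) :=
        mul_pos (mul_pos hq0 (by linarith)) (by linarith)
      linarith
end

section
/- Suppose after σ₁=α only decision-maker i (with lower prior pⁱ < pʲ) observes σ₂=β, while j stops at σ₁. Then the updates have opposite directions (pʲ_α > pʲ while pⁱ_{αβ} < pⁱ) if and only if θ₂ > θ₁; moreover θ₂ > θ₁ also implies divergence |pʲ_α - pⁱ_{αβ}| > |pʲ - pⁱ|. -/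
/-- If after σ₁=α only the lower-prior DM i observes σ₂=β, the updates move in
opposite directions iff θ₂ > θ₁; moreover θ₂ > θ₁ implies divergence. -/
theorem polarization_direction_divergence (θ₁ θ₂ pi pj : ℝ)
    (h1 : 1/2 < θ₁) (h1' : θ₁ < 1) (h2 : 1/2 < θ₂) (h2' : θ₂ < 1)
    (hpi0 : 0 < pi) (hij : pi < pj) (hpj1 : pj < 1) :
    ((pj < θ₁ * pj / (θ₁ * pj + (1 - θ₁) * (1 - pj)) ∧
        θ₁ * (1 - θ₂) * pi / (θ₁ * (1 - θ₂) * pi + (1 - θ₁) * θ₂ * (1 - pi)) < pi) ↔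
      θ₁ < θ₂) ∧
    (θ₁ < θ₂ →
      |pj - pi| <
        |θ₁ * pj / (θ₁ * pj + (1 - θ₁) * (1 - pj)) -
          θ₁ * (1 - θ₂) * pi / (θ₁ * (1 - θ₂) * pi + (1 - θ₁) * θ₂ * (1 - pi))|) := by
  have hpj0 : 0 < pj := lt_trans hpi0 hij
  have hpi1 : pi < 1 := lt_trans hij hpj1
  have h1pi : 0 < 1 - pi := by linarith
  have h1pj : 0 < 1 - pj := by linarith
  have hD1 : 0 < θ₁ * pj + (1 - θ₁) * (1 - pj) := by
    have := mul_pos (show (0:ℝ) < θ₁ by linarith) hpj0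
    have := mul_pos (show (0:ℝ) < 1 - θ₁ by linarith) h1pj
    linarith
  have hD2 : 0 < θ₁ * (1 - θ₂) * pi + (1 - θ₁) * θ₂ * (1 - pi) := by
    have := mul_pos (mul_pos (show (0:ℝ) < θ₁ by linarith) (show (0:ℝ) < 1 - θ₂ by linarith)) hpi0
    have := mul_pos (mul_pos (show (0:ℝ) < 1 - θ₁ by linarith) (show (0:ℝ) < θ₂ by linarith)) h1pi
    linarith
  have hj : pj < θ₁ * pj / (θ₁ * pj + (1 - θ₁) * (1 - pj)) := by
    rw [lt_div_iff₀ hD1]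
    nlinarith [mul_pos (mul_pos hpj0 h1pj) (show (0:ℝ) < 2*θ₁ - 1 by linarith)]
  have key : ∀ x : ℝ, θ₁ * (1 - θ₂) * pi - pi * (θ₁ * (1 - θ₂) * pi + (1 - θ₁) * θ₂ * (1 - pi))
      = pi * (1 - pi) * (θ₁ - θ₂) := by intro x; ring
  have hi : θ₁ * (1 - θ₂) * pi / (θ₁ * (1 - θ₂) * pi + (1 - θ₁) * θ₂ * (1 - pi)) < pi ↔
      θ₁ < θ₂ := by
    rw [div_lt_iff₀ hD2, ← sub_neg, key 0]
    constructor
    · intro h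
      by_contra hc
      push_neg at hc
      nlinarith [mul_pos hpi0 h1pi]
    · intro h
      have : pi * (1 - pi) * (θ₁ - θ₂) < 0 := by
        apply mul_neg_of_pos_of_neg (mul_pos hpi0 h1pi); linarith
      exact this
  constructor
  · constructor
    · rintro ⟨_, h⟩; exact hi.mp h
    · intro h; exact ⟨hj, hi.mpr h⟩
  · intro h
    have hi' := hi.mpr h
    rw [abs_of_pos (by linarith), abs_of_pos (by linarith)]
    linarith
end

section
/- Suppose after σ₁=α only the higher-prior decision-maker j observes σ₂=β (so j's posterior is pʲ_{αβ} and i's is pⁱ_α), with priors pⁱ < pʲ. Then divergence pʲ - pⁱ < pⁱ_α - pʲ_{αβ} requires θ₂ > g(pⁱ,pʲ,θ₁) where g = θ₁pʲ(1-pⁱ_α+pʲ-pⁱ) / [θ₁pʲ(1-pⁱ_α+pʲ-pⁱ) + (1-θ₁)(1-pʲ)(pⁱ_α-pʲ+pⁱ)], and if pⁱ_α ≤ pʲ - pⁱ then g ≥ 1, so no θ₂ ∈ (1/2,1) produces divergence. -/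
/-- If after σ₁=α only the higher-prior DM j observes σ₂=β, divergence
pʲ - pⁱ < pⁱ_α - pʲ_{αβ} requires θ₂ > g(pⁱ,pʲ,θ₁); and if pⁱ_α ≤ pʲ - pⁱ
then g ≥ 1, so no θ₂ ∈ (1/2,1) produces divergence. -/
theorem divergence_requires_theta2 (θ₁ θ₂ pi pj : ℝ)
    (h1 : 1/2 < θ₁) (h1' : θ₁ < 1) (h2 : 1/2 < θ₂) (h2' : θ₂ < 1)
    (hpi0 : 0 < pi) (hij : pi < pj) (hpj1 : pj < 1) :
    (pj - pi <
        θ₁ * pi / (θ₁ * pi + (1 - θ₁) * (1 - pi)) -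
          θ₁ * (1 - θ₂) * pj / (θ₁ * (1 - θ₂) * pj + (1 - θ₁) * θ₂ * (1 - pj)) →
      θ₁ * pj * (1 - θ₁ * pi / (θ₁ * pi + (1 - θ₁) * (1 - pi)) + pj - pi) /
          (θ₁ * pj * (1 - θ₁ * pi / (θ₁ * pi + (1 - θ₁) * (1 - pi)) + pj - pi) +
            (1 - θ₁) * (1 - pj) *
              (θ₁ * pi / (θ₁ * pi + (1 - θ₁) * (1 - pi)) - pj + pi)) < θ₂) ∧
    (θ₁ * pi / (θ₁ * pi + (1 - θ₁) * (1 - pi)) ≤ pj - pi →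
      1 ≤ θ₁ * pj * (1 - θ₁ * pi / (θ₁ * pi + (1 - θ₁) * (1 - pi)) + pj - pi) /
          (θ₁ * pj * (1 - θ₁ * pi / (θ₁ * pi + (1 - θ₁) * (1 - pi)) + pj - pi) +
            (1 - θ₁) * (1 - pj) *
              (θ₁ * pi / (θ₁ * pi + (1 - θ₁) * (1 - pi)) - pj + pi))) := by
  have hθ0 : 0 < θ₁ := by linarith
  have hθ1 : 0 < 1 - θ₁ := by linarith
  have hθ2 : 0 < θ₂ := by linarith
  have hθ2' : 0 < 1 - θ₂ := by linarith
  have hpi1 : pi < 1 := lt_trans hij hpj1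
  have hpj0 : 0 < pj := lt_trans hpi0 hij
  set D := θ₁ * pi + (1 - θ₁) * (1 - pi) with hD
  have hD0 : 0 < D := by
    have := mul_pos hθ0 hpi0
    have := mul_pos hθ1 (by linarith : (0:ℝ) < 1 - pi)
    linarith
  set A := θ₁ * pi / D with hA
  have hA0 : 0 < A := div_pos (mul_pos hθ0 hpi0) hD0
  have hA1 : A < 1 := by
    rw [hA, div_lt_one hD0, hD]
    nlinarith
  -- D < θ₁
  have hDθ : D < θ₁ := by rw [hD]; nlinarith
  -- positivity of denominator N + M
  have hNM : 0 < θ₁ * pj * (1 - A + pj - pi) + (1 - θ₁) * (1 - pj) * (A - pj + pi) := by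
    have hAD : A * D = θ₁ * pi := by
      rw [hA]; field_simp
    have hineq : (1 - θ₁) * (1 - pi) < θ₁ * (1 - A) := by
      nlinarith [mul_pos (by linarith : (0:ℝ) < 1 - A) (by linarith : (0:ℝ) < θ₁ - D)]
    have hq : (1 - θ₁) * (1 - pi) * pj < θ₁ * (1 - A) * pj :=
      mul_lt_mul_of_pos_right hineq hpj0
    nlinarith [hq,
      mul_pos (mul_pos hθ1 (by linarith : (0:ℝ) < 1 - pj)) hA0,
      mul_pos (mul_pos hθ0 hpj0) (by linarith : (0:ℝ) < pj - pi),
      mul_pos hθ1 (mul_pos hpi0 (by linarith : (0:ℝ) < 1 - pj)),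
      mul_pos hθ1 (mul_pos hpj0 (by linarith : (0:ℝ) < pj - pi))]
  constructor
  · intro h
    set E := θ₁ * (1 - θ₂) * pj + (1 - θ₁) * θ₂ * (1 - pj) with hE
    have hE0 : 0 < E := by
      have := mul_pos (mul_pos hθ0 hθ2') hpj0
      have := mul_pos (mul_pos hθ1 hθ2) (by linarith : (0:ℝ) < 1 - pj)
      linarith
    have hkey : θ₁ * (1 - θ₂) * pj < (A - pj + pi) * E := by
      have h' : θ₁ * (1 - θ₂) * pj / E < A - (pj - pi) := by linarith
      rw [div_lt_iff₀ hE0] at h'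
      linarith [h']
    rw [div_lt_iff₀ hNM]
    rw [hE] at hkey
    nlinarith [hkey]
  · intro h
    rw [le_div_iff₀ hNM, one_mul]
    nlinarith [mul_pos hθ1 (by linarith : (0:ℝ) < 1 - pj)]
end

section
/- The ex-ante probability of belief polarization, Pr(PB) = Pr(σ₁=α)Pr(σ₂=β) + Pr(σ₁=β)Pr(σ₂=α) = (θ₁+θ₂-2θ₁θ₂)[1-4p(1-p)] + 2p(1-p), is at most 1/2 for all p ∈ [0,1] and θ₁,θ₂ ∈ (1/2,1), with the bound approached as θ₁ → 1/2⁺ and θ₂ → 1⁻ or at p = 1/2. -/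
/-- The ex-ante probability of belief polarization,
(θ₁+θ₂-2θ₁θ₂)(1-4p(1-p)) + 2p(1-p), is at most 1/2, with value exactly 1/2
at p = 1/2. -/
theorem prob_polarization_le_half (θ₁ θ₂ p : ℝ)
    (h1 : 1/2 < θ₁) (h1' : θ₁ < 1) (h2 : 1/2 < θ₂) (h2' : θ₂ < 1)
    (hp0 : 0 ≤ p) (hp1 : p ≤ 1) :
    (θ₁ + θ₂ - 2 * θ₁ * θ₂) * (1 - 4 * p * (1 - p)) + 2 * p * (1 - p) ≤ 1/2 ∧
    (θ₁ + θ₂ - 2 * θ₁ * θ₂) * (1 - 4 * (1/2 : ℝ) * (1 - 1/2)) +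
      2 * (1/2 : ℝ) * (1 - 1/2) = 1/2 := by
  constructor
  · nlinarith [mul_pos (by linarith : (0:ℝ) < 2*θ₁ - 1) (by linarith : (0:ℝ) < 2*θ₂ - 1),
      sq_nonneg (2*p - 1), mul_nonneg (mul_pos (by linarith : (0:ℝ) < 2*θ₁ - 1) (by linarith : (0:ℝ) < 2*θ₂ - 1)).le (sq_nonneg (2*p - 1))]
  · ring
end

section
/- A decision-maker with prior p > 1/2 and p ∈ ¬E_β (i.e., θ₁(1-θ₂)/(θ₁+θ₂-2θ₁θ₂) < p < θ₁θ₂/(1-θ₁-θ₂+2θ₁θ₂)) has strictly greater willingness to pay for the second signal after contradicting evidence than after confirming evidence: c_β(p) > c_α(p) ≥ 0. -/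
set_option maxHeartbeats 1000000 in
/-- Tendency for disconfirmation: a DM with prior p > 1/2 in ¬E_β is willing
to pay strictly more after contradicting evidence: c_β(p) > c_α(p) ≥ 0. -/
theorem disconfirmation_tendency (θ₁ θ₂ ΔU p : ℝ)
    (h1 : 1/2 < θ₁) (h1' : θ₁ < 1) (h2 : 1/2 < θ₂) (h2' : θ₂ < 1) (hU : 0 < ΔU)
    (hp : 1/2 < p)
    (hl : θ₁ * (1 - θ₂) / (θ₁ + θ₂ - 2 * θ₁ * θ₂) < p)
    (hr : p < θ₁ * θ₂ / (1 - θ₁ - θ₂ + 2 * θ₁ * θ₂)) :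
    costAlpha ΔU θ₁ θ₂ p < costBeta ΔU θ₁ θ₂ p ∧ 0 ≤ costAlpha ΔU θ₁ θ₂ p := by

  have hD1 : 0 < θ₁ + θ₂ - 2 * θ₁ * θ₂ := by nlinarith
  have hD2 : 0 < 1 - θ₁ - θ₂ + 2 * θ₁ * θ₂ := by nlinarith
  have hp1 : p < 1 := by
    have : θ₁ * θ₂ / (1 - θ₁ - θ₂ + 2 * θ₁ * θ₂) < 1 := by
      rw [div_lt_one hD2]; nlinarith
    linarith
  have hp0 : 0 < p := by linarith
  have hrd : p * (1 - θ₁ - θ₂ + 2 * θ₁ * θ₂) < θ₁ * θ₂ := (lt_div_iff₀ hD2).mp hr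
  have hld : θ₁ * (1 - θ₂) < p * (θ₁ + θ₂ - 2 * θ₁ * θ₂) := (div_lt_iff₀ hD1).mp hl
  have hA1 : ¬ (p ≤ 1 - θ₁ * θ₂ / (1 - θ₁ - θ₂ + 2 * θ₁ * θ₂)) := by
    push_neg
    have : 1/2 < θ₁ * θ₂ / (1 - θ₁ - θ₂ + 2 * θ₁ * θ₂) := by
      rw [lt_div_iff₀ hD2]; nlinarith
    linarith
  have hA2 : ¬ (p ≤ 1 - θ₁) := by push_neg; linarith
  have hDa : 0 < θ₁ * p + (1 - θ₁) * (1 - p) := by nlinarith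
  have hDb : 0 < (1 - θ₁) * p + θ₁ * (1 - p) := by nlinarith
  rw [costAlpha, costBeta, if_neg hA1, if_neg hA2, if_neg (not_le.mpr hl)]
  split_ifs with hc hb hb2 hb hb2
  · -- costAlpha branch 3, costBeta branch 2
    have hA : 0 ≤ θ₂ * (1 - p) - θ₁ * p - θ₁ * θ₂ * (1 - 2 * p) := by
      have := (le_div_iff₀ hD1).mp hc; nlinarith
    constructor
    · apply mul_lt_mul_of_pos_left _ hU
      rw [div_lt_div_iff₀ hDa hDb]
      nlinarith [mul_pos (mul_pos (show (0:ℝ) < 2*p-1 by linarith)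
        (show (0:ℝ) < θ₁ by linarith)) (show (0:ℝ) < 1-θ₁ by linarith)]
    · exact mul_nonneg hU.le (div_nonneg hA hDa.le)
  · -- costAlpha branch 3, costBeta branch 3
    have hA : 0 ≤ θ₂ * (1 - p) - θ₁ * p - θ₁ * θ₂ * (1 - 2 * p) := by
      have := (le_div_iff₀ hD1).mp hc; nlinarith
    constructor
    · apply mul_lt_mul_of_pos_left _ hU
      rw [div_lt_div_iff₀ hDa hDb]
      nlinarith [mul_pos (mul_pos hp0 (show (0:ℝ) < 1-p by linarith))
        (show (0:ℝ) < 2*θ₁-1 by linarith)]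
    · exact mul_nonneg hU.le (div_nonneg hA hDa.le)
  · exact absurd (le_of_lt hr) hb2
  · -- costAlpha = 0, costBeta branch 2
    have hB : 0 < (1 - θ₁) * θ₂ * p - θ₁ * (1 - θ₂) * (1 - p) := by nlinarith
    exact ⟨mul_pos hU (div_pos hB hDb), le_refl 0⟩
  · -- costAlpha = 0, costBeta branch 3
    have hB : 0 < θ₁ * θ₂ * (1 - p) - (1 - θ₁) * (1 - θ₂) * p := by nlinarith
    exact ⟨mul_pos hU (div_pos hB hDb), le_refl 0⟩
  · exact absurd (le_of_lt hr) hb2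
end
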